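/- Let (U, δ) be a differential field of characteristic zero with constants C, and let K ⊆ L ⊆ U be differential subfields. Then K(C) ∩ L = K(L ∩ C), i.e., the intersection of L with the field generated by K and all constants of U equals the field generated by K and the constants of L. -/

import Mathlib

/-!
An element `x ∈ L` of `K(C)` is a quotient `p / q` of two elements of the `K`-span of `C`.
Fix a `C_L`-basis `b` of `C`; then `p` and `q` are combinations of `b` with coefficients in
`K(C_L)`. Constants that are linearly independent over `C_L` stay linearly independent over
`L`: differentiating a shortest `L`-linear relation, normalised to have a coefficient `1`,
gives a shorter one, so all its coefficients are constants. Comparing coefficients in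
`x * q = p` therefore expresses `x` as a quotient of two coefficients, which lie in `K(C_L)`.
-/

open Submodule

namespace Derivation

def ofLeibniz {A : Type*} [CommRing A] (δ : A → A)
    (hadd : ∀ a b, δ (a + b) = δ a + δ b) (hmul : ∀ a b, δ (a * b) = a * δ b + b * δ a) :
    Derivation ℤ A A :=
  mk' (AddMonoidHom.mk' δ hadd).toIntLinearMap fun a b => hmul a b

variable {R U : Type*} [CommRing R] [Field U] [Algebra R U] (D : Derivation R U U)

def constants : Subfield U where
  carrier := {x | D x = 0}
  mul_mem' {a b} ha hb := by simp_all [leibniz]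
  one_mem' := D.map_one_eq_zero
  add_mem' {a b} ha hb := by simp_all
  zero_mem' := D.map_zero
  neg_mem' {a} ha := by simp_all
  inv_mem' {a} ha := by simp_all [leibniz_inv]

variable {D}

theorem linearIndependent_of_linearIndependent_inf_constants {ι : Type*} {v : ι → U}
    (hv : ∀ i, D (v i) = 0) {L : Subfield U} (hL : ∀ x ∈ L, D x ∈ L)
    (h : LinearIndependent ↥(L ⊓ D.constants) v) : LinearIndependent L v := by
  classical
  rw [linearIndependent_iff']
  intro s
  induction s using Finset.strongInduction with
  | H s ih =>
  intro g hg i₀ hi₀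
  by_contra hne
  set c : ι → L := (g i₀)⁻¹ • g with hc
  have hc₀ : c i₀ = 1 := inv_mul_cancel₀ hne
  have hrel : ∑ i ∈ s, c i • v i = 0 := by
    simp only [hc, Pi.smul_apply, smul_assoc, ← Finset.smul_sum, hg, smul_zero]
  let dc : ι → L := fun i => ⟨D (c i), hL _ (c i).2⟩
  have hdrel : ∑ i ∈ s, dc i • v i = 0 := by
    simpa [Subfield.smul_def, leibniz, hv, dc, mul_comm] using congrArg D hrel
  have hdc₀ : dc i₀ = 0 := Subtype.ext (by simp [dc, hc₀])
  have hconst : ∀ i ∈ s, D (c i) = 0 := by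
    intro i hi
    by_cases hi' : i = i₀
    · subst hi'
      exact congrArg Subtype.val hdc₀
    · have hshort : ∑ j ∈ s.erase i₀, dc j • v j = 0 := by
        rwa [Finset.sum_erase s (by simp [hdc₀])]
      exact congrArg Subtype.val
        (ih _ (Finset.erase_ssubset hi₀) dc hshort i (Finset.mem_erase.mpr ⟨hi', hi⟩))
  let c' : ι → ↥(L ⊓ D.constants) := fun i =>
    if hi : i ∈ s then ⟨c i, (c i).2, hconst i hi⟩ else 0
  have hrel' : ∑ i ∈ s, c' i • v i = 0 := by
    rw [← hrel]
    refine Finset.sum_congr rfl fun i hi => ?_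
    simp [c', hi, Subfield.smul_def]
  have := congrArg Subtype.val (linearIndependent_iff'.mp h s c' hrel' i₀ hi₀)
  simp [c', hi₀, hc₀] at this

end Derivation

namespace Subfield

variable {U : Type*} [Field U]

theorem span_subset_span_of_le {A B : Subfield U} (hAB : A ≤ B) (s : Set U) :
    (span A s : Set U) ⊆ span B s := by
  intro x hx
  induction hx using Submodule.span_induction with
  | mem y hy => exact subset_span hy
  | zero => exact zero_mem _
  | add y z _ _ hy hz => exact add_mem hy hz
  | smul a y _ hy => exact (span B s).smul_mem ⟨a, hAB a.2⟩ hy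

theorem subring_closure_union_subset_span {F : Subfield U} {s : Set U} (hs : s ⊆ F)
    (M : Submonoid U) : (Subring.closure (s ∪ M) : Set U) ⊆ span F (M : Set U) := by
  have hspan : span F (M : Set U) = Subalgebra.toSubmodule (Algebra.adjoin F (M : Set U)) := by
    rw [Algebra.adjoin_eq_span, Submonoid.closure_eq]
  rw [hspan]
  refine Subring.closure_le (t := (Algebra.adjoin F (M : Set U)).toSubring).mpr ?_
  rintro x (hx | hx)
  · exact Subalgebra.algebraMap_mem _ (⟨x, hs hx⟩ : F)
  · exact Algebra.subset_adjoin hx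

theorem mem_of_mul_mem_span {F L : Subfield U} (hFL : F ≤ L) {b : Set U}
    (hb : LinearIndependent L ((↑) : b → U)) {x p q : U} (hxL : x ∈ L)
    (hp : p ∈ span F b) (hq : q ∈ span F b) (hq0 : q ≠ 0) (hpq : x * q = p) : x ∈ F := by
  obtain ⟨α, rfl⟩ := (Finsupp.mem_span_iff_linearCombination F b p).mp hp
  obtain ⟨β, rfl⟩ := (Finsupp.mem_span_iff_linearCombination F b q).mp hq
  have hlift : ∀ γ : b →₀ F, Finsupp.linearCombination L (↑) (γ.mapRange
      (inclusion hFL) (map_zero _)) = Finsupp.linearCombination F ((↑) : b → U) γ := by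
    intro γ
    rw [Finsupp.linearCombination_apply, Finsupp.linearCombination_apply,
      Finsupp.sum_mapRange_index (h := fun (i : b) (a : L) => a • (i : U)) fun _ => zero_smul _ _]
    rfl
  have hcoeff : (⟨x, hxL⟩ : L) • β.mapRange (inclusion hFL) (map_zero _) =
      α.mapRange (inclusion hFL) (map_zero _) := by
    apply hb
    rw [map_smul, hlift, hlift, Subfield.smul_def, smul_eq_mul, hpq]
  have hβ : β ≠ 0 := by
    rintro rfl
    simp at hq0
  obtain ⟨e, he⟩ := Finsupp.ne_iff.mp hβ
  have hxe : x * β e = α e := congrArg Subtype.val (DFunLike.congr_fun hcoeff e)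
  rw [← eq_div_iff (by simpa using he)] at hxe
  rw [hxe]
  exact div_mem (α e).2 (β e).2

end Subfield

theorem adjoin_constants_inter_general
    (U : Type*) [Field U] (δ : U → U)
    (hadd : ∀ a b, δ (a + b) = δ a + δ b)
    (hmul : ∀ a b, δ (a * b) = a * δ b + b * δ a)
    (K L : Subfield U)
    (hL : ∀ x ∈ L, δ x ∈ L)
    (hKL : K ≤ L) :
    Subfield.closure ((K : Set U) ∪ {x : U | δ x = 0}) ⊓ L =
      Subfield.closure ((K : Set U) ∪ ((L : Set U) ∩ {x : U | δ x = 0})) := by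
  set D := Derivation.ofLeibniz δ hadd hmul
  set F := Subfield.closure ((K : Set U) ∪ ((L : Set U) ∩ {x : U | δ x = 0}))
  have hKF : K ≤ F := fun k hk => Subfield.subset_closure (Or.inl hk)
  have hCLF : L ⊓ D.constants ≤ F := fun c hc => Subfield.subset_closure (Or.inr hc)
  have hFL : F ≤ L := Subfield.closure_le.mpr (Set.union_subset hKL Set.inter_subset_left)
  refine le_antisymm ?_ (le_inf (Subfield.closure_mono
    (Set.union_subset_union_right _ Set.inter_subset_right)) hFL)
  rintro x ⟨hxKC, hxL⟩
  obtain ⟨b, hbC, hspan, hb⟩ := exists_linearIndependent ↥(L ⊓ D.constants) (D.constants : Set U)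
  have hCb : (D.constants : Set U) ⊆ span F b := fun c hc =>
    Subfield.span_subset_span_of_le hCLF b (hspan ▸ subset_span hc)
  have hKCb : (Subring.closure ((K : Set U) ∪ D.constants) : Set U) ⊆ span F b :=
    (Subfield.subring_closure_union_subset_span hKF D.constants.toSubmonoid).trans (span_le.mpr hCb)
  obtain ⟨p, hp, q, hq, rfl⟩ := Subfield.mem_closure_iff.mp hxKC
  rcases eq_or_ne q 0 with rfl | hq0
  · simp
  exact Subfield.mem_of_mul_mem_span hFL
    (Derivation.linearIndependent_of_linearIndependent_inf_constants (fun i => hbC i.2) hL hb)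
    hxL (hKCb hp) (hKCb hq) hq0 (div_mul_cancel₀ p hq0)

/-- Lemma 3.1(i): for differential subfields `K ⊆ L` of a differential field `U`
with constants `C`, one has `K(C) ∩ L = K(L ∩ C)`. -/
theorem adjoin_constants_inter
    (U : Type*) [Field U] [CharZero U] (δ : U → U)
    (hadd : ∀ a b, δ (a + b) = δ a + δ b)
    (hmul : ∀ a b, δ (a * b) = a * δ b + b * δ a)
    (K L : Subfield U)
    (hK : ∀ x ∈ K, δ x ∈ K)
    (hL : ∀ x ∈ L, δ x ∈ L)
    (hKL : K ≤ L) :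
    Subfield.closure ((K : Set U) ∪ {x : U | δ x = 0}) ⊓ L =
      Subfield.closure ((K : Set U) ∪ ((L : Set U) ∩ {x : U | δ x = 0})) :=
  adjoin_constants_inter_general U δ hadd hmul K L hL hKL
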